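/- Let M ≥ 2 be an integer, p ∈ (0,1), ε > 0, and φ with sinφ cosφ ≠ 0; set α = (π/4)·√|sinφ cosφ|. If |sin θ| satisfies 1/(α M^{1+ε/4}) < |sin θ| < 1/(2α M^{(p+1)/2+ε/4}), then both |sin((πM/2) sinθ cosφ)| > 1/M^{ε/2} · (using the bound |sin x| > |x|/2 for small x) and |sin((π/2) sinθ cosφ) · sin((π/2) sinθ sinφ)| < 1/M^{(p+1)+ε/2} hold, provided the relevant arguments lie in (0, π/2). -/

import Mathlib

/-!
Write `g = α |sin θ|`. For the arguments `x = k sin θ cos φ`, `y = k sin θ sin φ` one has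
`|x y| = k² sin² θ |sin φ cos φ| = (4k/π · g)²`, so with `k = πM/2` and `k = π/2` both products of
arguments are squares of multiples of `g`, and the interval for `|sin θ|` is an interval for `g`.
The lower bound then follows from Jordan's inequality `sin x > 2x/π > x/2` on `(0, π/2)`,
the upper bound from `|sin x| ≤ |x|`.
-/

open Real

lemma abs_mul_mul_cos_mul_mul_sin (k t c s : ℝ) :
    |k * (t * c) * (k * (t * s))| = (k * √|s * c| * |t|) ^ 2 := by
  rw [mul_pow, mul_pow, sq_sqrt (abs_nonneg _), sq_abs,
    show k * (t * c) * (k * (t * s)) = (k * t) ^ 2 * (s * c) by ring, abs_mul, abs_sq]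
  ring

lemma half_lt_sin {x : ℝ} (hx : x ∈ Set.Ioo 0 (π / 2)) : x / 2 < sin x := by
  have hπ : 1 / 2 < 2 / π := by
    rw [div_lt_div_iff₀ two_pos pi_pos]
    linarith [pi_lt_four]
  calc x / 2 = 1 / 2 * x := by ring
    _ < 2 / π * x := by gcongr; exact hx.1
    _ < sin x := mul_lt_sin hx.1 hx.2

lemma abs_mul_lt_four_mul_abs_sin_mul_sin {x y : ℝ} (hx : x ∈ Set.Ioo 0 (π / 2))
    (hy : y ∈ Set.Ioo 0 (π / 2)) : |x * y| < 4 * |sin x * sin y| := by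
  have hsx := half_lt_sin hx
  have hsy := half_lt_sin hy
  have hx0 : 0 < x / 2 := half_pos hx.1
  have hy0 : 0 < y / 2 := half_pos hy.1
  calc |x * y| = 4 * (x / 2 * (y / 2)) := by rw [abs_of_pos (mul_pos hx.1 hy.1)]; ring
    _ < 4 * (sin x * sin y) := by gcongr
    _ ≤ 4 * |sin x * sin y| := by gcongr; exact le_abs_self _

lemma abs_sin_mul_sin_le (x y : ℝ) : |sin x * sin y| ≤ |x * y| := by
  rw [abs_mul, abs_mul]
  exact mul_le_mul abs_sin_le_abs abs_sin_le_abs (abs_nonneg _) (abs_nonneg _)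

lemma one_div_rpow_sq {M : ℝ} (hM : 0 < M) (r : ℝ) : (1 / M ^ r) ^ 2 = 1 / M ^ (2 * r) := by
  rw [div_pow, one_pow, ← rpow_mul_natCast hM.le, Nat.cast_ofNat, mul_comm]

lemma one_div_lt_mul_of_one_div_mul_lt {a b x : ℝ} (ha : 0 < a) (hb : 0 < b)
    (h : 1 / (a * b) < x) : 1 / b < a * x := by
  rw [div_lt_iff₀ (mul_pos ha hb)] at h
  rw [div_lt_iff₀ hb]
  linarith

lemma mul_lt_one_div_of_lt_one_div_mul {a b x : ℝ} (ha : 0 < a) (hb : 0 < b)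
    (h : x < 1 / (a * b)) : a * x < 1 / b := by
  rw [lt_div_iff₀ (mul_pos ha hb)] at h
  rw [lt_div_iff₀ hb]
  linarith

theorem fejer_sufficient_conditions_general (M : ℕ) (hM : 2 ≤ M) (p ε θ φ : ℝ)
    (hφ : Real.sin φ * Real.cos φ ≠ 0)
    (α : ℝ) (hα : α = Real.pi / 4 * Real.sqrt |Real.sin φ * Real.cos φ|)
    (hlow : 1 / (α * (M : ℝ) ^ (1 + ε / 4)) < |Real.sin θ|)
    (hhigh : |Real.sin θ| < 1 / (2 * α * (M : ℝ) ^ ((p + 1) / 2 + ε / 4)))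
    (harg1 : Real.pi * M / 2 * (Real.sin θ * Real.cos φ) ∈ Set.Ioo 0 (Real.pi / 2))
    (harg2 : Real.pi * M / 2 * (Real.sin θ * Real.sin φ) ∈ Set.Ioo 0 (Real.pi / 2)) :
    |Real.sin (Real.pi * M / 2 * (Real.sin θ * Real.cos φ)) *
        Real.sin (Real.pi * M / 2 * (Real.sin θ * Real.sin φ))| > 1 / (M : ℝ) ^ (ε / 2) ∧
    |Real.sin (Real.pi / 2 * (Real.sin θ * Real.cos φ)) *
        Real.sin (Real.pi / 2 * (Real.sin θ * Real.sin φ))| <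
      1 / (M : ℝ) ^ ((p + 1) + ε / 2) := by
  have hM0 : (0 : ℝ) < M := by exact_mod_cast (by omega : 0 < M)
  have hα0 : 0 < α := hα ▸ mul_pos (by positivity) (sqrt_pos.mpr (abs_pos.mpr hφ))
  set g := α * |sin θ| with hg
  have hg_low : 1 / (M : ℝ) ^ (1 + ε / 4) < g :=
    one_div_lt_mul_of_one_div_mul_lt hα0 (by positivity) hlow
  have hg_high : 2 * g < 1 / (M : ℝ) ^ ((p + 1) / 2 + ε / 4) := by
    rw [hg, ← mul_assoc]
    exact mul_lt_one_div_of_lt_one_div_mul (by positivity) (by positivity) hhigh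
  constructor
  · calc 1 / (M : ℝ) ^ (ε / 2) = (M * (1 / (M : ℝ) ^ (1 + ε / 4))) ^ 2 := by
          rw [rpow_add hM0, rpow_one, mul_one_div, div_mul_cancel_left₀ hM0.ne',
            ← one_div, one_div_rpow_sq hM0]
          ring_nf
      _ < (M * g) ^ 2 := by gcongr
      _ = |π * M / 2 * (sin θ * cos φ) * (π * M / 2 * (sin θ * sin φ))| / 4 := by
          rw [abs_mul_mul_cos_mul_mul_sin, hg, hα]
          ring
      _ < _ := by linarith [abs_mul_lt_four_mul_abs_sin_mul_sin harg1 harg2]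
  · calc _ ≤ |π / 2 * (sin θ * cos φ) * (π / 2 * (sin θ * sin φ))| := abs_sin_mul_sin_le _ _
      _ = (2 * g) ^ 2 := by
          rw [abs_mul_mul_cos_mul_mul_sin, hg, hα]
          ring
      _ < (1 / (M : ℝ) ^ ((p + 1) / 2 + ε / 4)) ^ 2 := by gcongr
      _ = 1 / (M : ℝ) ^ ((p + 1) + ε / 2) := by
          rw [one_div_rpow_sq hM0]
          ring_nf

/-- Core sufficient-condition computation of Theorem 1 (φ ≠ 0 case):
the displayed interval for `|sin θ|` implies the numerator lower bound and
denominator upper bound of the Fejér-kernel beam gain. -/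
theorem fejer_sufficient_conditions (M : ℕ) (hM : 2 ≤ M) (p ε θ φ : ℝ)
    (hp : 0 < p) (hp1 : p < 1) (hε : 0 < ε)
    (hφ : Real.sin φ * Real.cos φ ≠ 0)
    (α : ℝ) (hα : α = Real.pi / 4 * Real.sqrt |Real.sin φ * Real.cos φ|)
    (hlow : 1 / (α * (M : ℝ) ^ (1 + ε / 4)) < |Real.sin θ|)
    (hhigh : |Real.sin θ| < 1 / (2 * α * (M : ℝ) ^ ((p + 1) / 2 + ε / 4)))
    (harg1 : Real.pi * M / 2 * (Real.sin θ * Real.cos φ) ∈ Set.Ioo 0 (Real.pi / 2))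
    (harg2 : Real.pi * M / 2 * (Real.sin θ * Real.sin φ) ∈ Set.Ioo 0 (Real.pi / 2))
    (harg3 : Real.pi / 2 * (Real.sin θ * Real.cos φ) ∈ Set.Ioo 0 (Real.pi / 2))
    (harg4 : Real.pi / 2 * (Real.sin θ * Real.sin φ) ∈ Set.Ioo 0 (Real.pi / 2)) :
    |Real.sin (Real.pi * M / 2 * (Real.sin θ * Real.cos φ)) *
        Real.sin (Real.pi * M / 2 * (Real.sin θ * Real.sin φ))| > 1 / (M : ℝ) ^ (ε / 2) ∧
    |Real.sin (Real.pi / 2 * (Real.sin θ * Real.cos φ)) *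
        Real.sin (Real.pi / 2 * (Real.sin θ * Real.sin φ))| <
      1 / (M : ℝ) ^ ((p + 1) + ε / 2) :=
  fejer_sufficient_conditions_general M hM p ε θ φ hφ α hα hlow hhigh harg1 harg2
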